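/- arXiv:2001.02313 — 5 statements merged into one kernel-verified Lean document; each statement's English description precedes it below -/
import Mathlib

section
/- Let X be a compact complex manifold of dimension n. For classes {α}_{E₂} ∈ E₂^{p,q}(X) and {β}_{E₂} ∈ E₂^{n-p,n-q}(X) on the second page of the Frölicher spectral sequence, the pairing ({α},{β}) ↦ ∫_X α∧β is well defined, i.e. independent of the choices of representatives: if α is replaced by α + ∂η + ∂̄ζ with ∂̄η = 0, or β is replaced by β + ∂a + ∂̄b with ∂̄a = 0, the value of the integral is unchanged. -/
namespace Stmt0

variable {K : Type} [Field K] {V : Type} [AddCommGroup V] [Module K V]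

/-- A bigraded double complex structure on `V`: grading `g p q` (the `(p,q)`-forms),
`d1 = ∂`, `d2 = ∂̄`. -/
structure IsBigradedDC (g : ℤ → ℤ → Submodule K V) (d1 d2 : V →ₗ[K] V) : Prop where
  internal : DirectSum.IsInternal (fun pq : ℤ × ℤ => g pq.1 pq.2)
  d1_sq : ∀ v : V, d1 (d1 v) = 0
  d2_sq : ∀ v : V, d2 (d2 v) = 0
  anticomm : ∀ v : V, d1 (d2 v) + d2 (d1 v) = 0
  d1_mem : ∀ p q : ℤ, ∀ v ∈ g p q, d1 v ∈ g (p + 1) q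
  d2_mem : ∀ p q : ℤ, ∀ v ∈ g p q, d2 v ∈ g p (q + 1)

def transpose (g : ℤ → ℤ → Submodule K V) : ℤ → ℤ → Submodule K V := fun p q => g q p

/-- "`d1 x` runs at least `m` times": there are `u₁, …, u_m` with
`∂x = ∂̄u₁, ∂u₁ = ∂̄u₂, …, ∂u_{m-1} = ∂̄u_m` (here `u l` is `u_{l+1}`). -/
def RunsTimes (g : ℤ → ℤ → Submodule K V) (d1 d2 : V →ₗ[K] V) (m : ℕ) (p q : ℤ) (x : V) :
    Prop :=
  ∃ u : ℕ → V, (∀ l : ℕ, u l ∈ g (p + 1 + (l : ℤ)) (q - 1 - (l : ℤ))) ∧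
    (1 ≤ m → d1 x = d2 (u 0)) ∧ ∀ l : ℕ, l + 2 ≤ m → d1 (u l) = d2 (u (l + 1))

/-- `x` (a pure `(p,q)`-form) is `E_r`-closed. -/
def ErClosed (g : ℤ → ℤ → Submodule K V) (d1 d2 : V →ₗ[K] V) (r : ℕ) (p q : ℤ) (x : V) :
    Prop :=
  d2 x = 0 ∧ RunsTimes g d1 d2 (r - 1) p q x

/-- "`d2 z` reaches `0` in at most `m` steps":
`∂̄z = ∂v_{m-2}, ∂̄v_{m-2} = ∂v_{m-3}, …, ∂̄v₀ = 0` (here `v l` is `v_{m-2-l}`). -/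
def ReachesZero (g : ℤ → ℤ → Submodule K V) (d1 d2 : V →ₗ[K] V) (m : ℕ) (p q : ℤ) (z : V) :
    Prop :=
  ∃ v : ℕ → V, (∀ l : ℕ, v l ∈ g (p - 1 - (l : ℤ)) (q + 1 + (l : ℤ))) ∧
    (m = 1 → d2 z = 0) ∧
    (2 ≤ m → d2 z = d1 (v 0) ∧ d2 (v (m - 2)) = 0 ∧
      ∀ l : ℕ, l + 3 ≤ m → d2 (v l) = d1 (v (l + 1)))

/-- `x` (a pure `(p,q)`-form) is `E_r`-exact. -/
def ErExact (g : ℤ → ℤ → Submodule K V) (d1 d2 : V →ₗ[K] V) (r : ℕ) (p q : ℤ) (x : V) :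
    Prop :=
  ∃ z ξ : V, z ∈ g (p - 1) q ∧ ξ ∈ g p (q - 1) ∧ x = d1 z + d2 ξ ∧
    (r = 1 → z = 0) ∧ (2 ≤ r → ReachesZero g d1 d2 (r - 1) (p - 1) q z)

/-- `x` is `Ē_r`-exact (the conjugate notion: swap `∂` and `∂̄`, transpose the bigrading). -/
def ErBarExact (g : ℤ → ℤ → Submodule K V) (d1 d2 : V →ₗ[K] V) (r : ℕ) (p q : ℤ) (x : V) :
    Prop :=
  ErExact (transpose g) d2 d1 r q p x

/-- `x` is `E_rĒ_r`-closed: both `∂x` and `∂̄x` run at least `r-1` times. -/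
def ErErBarClosed (g : ℤ → ℤ → Submodule K V) (d1 d2 : V →ₗ[K] V) (r : ℕ) (p q : ℤ)
    (x : V) : Prop :=
  RunsTimes g d1 d2 (r - 1) p q x ∧ RunsTimes (transpose g) d2 d1 (r - 1) q p x

/-- `x` is `E_rĒ_r`-exact: `x = ∂z + ∂∂̄ξ + ∂̄η` with `∂̄z` and `∂η`
reaching `0` in at most `r-1` steps. -/
def ErErBarExact (g : ℤ → ℤ → Submodule K V) (d1 d2 : V →ₗ[K] V) (r : ℕ) (p q : ℤ)
    (x : V) : Prop :=
  ∃ z ξ η : V, z ∈ g (p - 1) q ∧ ξ ∈ g (p - 1) (q - 1) ∧ η ∈ g p (q - 1) ∧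
    x = d1 z + d1 (d2 ξ) + d2 η ∧
    (r = 1 → z = 0 ∧ η = 0) ∧
    (2 ≤ r → ReachesZero g d1 d2 (r - 1) (p - 1) q z ∧
      ReachesZero (transpose g) d2 d1 (r - 1) (q - 1) p η)

/-- The total-degree-`k` part of the complex. -/
def TotDeg (g : ℤ → ℤ → Submodule K V) (k : ℤ) : Submodule K V := ⨆ p : ℤ, g p (k - p)

/-- `x` (of total degree `k`) is `d`-exact. -/
def DExact (g : ℤ → ℤ → Submodule K V) (d1 d2 : V →ₗ[K] V) (k : ℤ) (x : V) : Prop :=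
  ∃ y ∈ TotDeg g (k - 1), x = d1 y + d2 y

/-- The De Rham cohomology in degree `k` is *full*: every `d`-closed form of total degree
`k` is, modulo `Im d`, a sum of `d`-closed pure-type forms. -/
def DRFull (g : ℤ → ℤ → Submodule K V) (d1 d2 : V →ₗ[K] V) (k : ℤ) : Prop :=
  ∀ x ∈ TotDeg g k, d1 x + d2 x = 0 →
    ∃ (s : Finset ℤ) (c : ℤ → V),
      (∀ p ∈ s, c p ∈ g p (k - p) ∧ d1 (c p) = 0 ∧ d2 (c p) = 0) ∧
      ∃ y ∈ TotDeg g (k - 1), x = (∑ p ∈ s, c p) + (d1 y + d2 y)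

/-- The De Rham cohomology in degree `k` is *pure*: the subspaces `H^{p,q}_{DR}` with
`p + q = k` are in direct sum. -/
def DRPureDeg (g : ℤ → ℤ → Submodule K V) (d1 d2 : V →ₗ[K] V) (k : ℤ) : Prop :=
  ∀ (s : Finset ℤ) (c : ℤ → V),
    (∀ p ∈ s, c p ∈ g p (k - p) ∧ d1 (c p) = 0 ∧ d2 (c p) = 0) →
    DExact g d1 d2 k (∑ p ∈ s, c p) → ∀ p ∈ s, DExact g d1 d2 k (c p)

/-- Purity of the De Rham cohomology: `H^k_{DR} = ⊕_{p+q=k} H^{p,q}_{DR}` for every `k`. -/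
def DRPure (g : ℤ → ℤ → Submodule K V) (d1 d2 : V →ₗ[K] V) : Prop :=
  (∀ k : ℤ, DRFull g d1 d2 k) ∧ ∀ k : ℤ, DRPureDeg g d1 d2 k

/-- The (column) Frölicher spectral sequence degenerates at `E_r`: from page `r` on, the
spaces of `E_s`-closed and `E_s`-exact pure-type forms stabilise. -/
def DegenAt (g : ℤ → ℤ → Submodule K V) (d1 d2 : V →ₗ[K] V) (r : ℕ) : Prop :=
  ∀ s : ℕ, r ≤ s → ∀ p q : ℤ, ∀ x ∈ g p q,
    (ErClosed g d1 d2 s p q x ↔ ErClosed g d1 d2 (s + 1) p q x) ∧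
    (ErExact g d1 d2 s p q x ↔ ErExact g d1 d2 (s + 1) p q x)

/-- `X` is a page-`r`-`∂∂̄`-manifold: the Frölicher spectral sequence degenerates at
`E_{r+1}` and the De Rham cohomology is pure. -/
def PageDdbar (g : ℤ → ℤ → Submodule K V) (d1 d2 : V →ₗ[K] V) (r : ℕ) : Prop :=
  DegenAt g d1 d2 (r + 1) ∧ DRPure g d1 d2

/-- Dimension of a subquotient `Nm / (Dn ∩ Nm)`. -/
noncomputable def hdim (Nm Dn : Submodule K V) : ℕ :=
  Module.finrank K (↥Nm ⧸ (Dn.comap Nm.subtype))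

/-- Stokes / integration-by-parts laws for the pairing `P α β = ∫_X α ∧ β` on a compact
complex `n`-dimensional manifold. -/
structure StokesPairing (g : ℤ → ℤ → Submodule K V) (d1 d2 : V →ₗ[K] V)
    (P : V →ₗ[K] V →ₗ[K] K) : Prop where
  stokes1 : ∀ p q : ℤ, ∀ x ∈ g p q, ∀ y : V,
    P (d1 x) y = (-1 : K) ^ (p + q + 1) * P x (d1 y)
  stokes2 : ∀ p q : ℤ, ∀ x ∈ g p q, ∀ y : V,
    P (d2 x) y = (-1 : K) ^ (p + q + 1) * P x (d2 y)

/-- On a compact complex `n`-dimensional manifold, the pairing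
`({α}_{E₂}, {β}_{E₂}) ↦ ∫_X α ∧ β` between `E₂^{p,q}` and `E₂^{n-p,n-q}` is well defined:
if the `E₂`-representative `α` (i.e. `∂̄α = 0`, `∂α = ∂̄u ∈ Im ∂̄`) is replaced by
`α + ∂η + ∂̄ζ` with `∂̄η = 0`, or the `E₂`-representative `β` is replaced by
`β + ∂a + ∂̄b` with `∂̄a = 0`, the value of the integral is unchanged. -/
theorem statement0 {W : Type} [AddCommGroup W] [Module ℂ W]
    (g : ℤ → ℤ → Submodule ℂ W) (d1 d2 : W →ₗ[ℂ] W)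
    (hdc : IsBigradedDC g d1 d2) (n : ℤ) (P : W →ₗ[ℂ] W →ₗ[ℂ] ℂ)
    (hP : StokesPairing g d1 d2 P)
    (p q p' q' : ℤ) (hcp : p + p' = n) (hcq : q + q' = n)
    (α β u v η ζ a b : W)
    (hα : α ∈ g p q) (hα2 : d2 α = 0) (hu : u ∈ g (p + 1) (q - 1)) (hα1 : d1 α = d2 u)
    (hβ : β ∈ g p' q') (hβ2 : d2 β = 0) (hv : v ∈ g (p' + 1) (q' - 1)) (hβ1 : d1 β = d2 v)
    (hη : η ∈ g (p - 1) q) (hη2 : d2 η = 0) (hζ : ζ ∈ g p (q - 1))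
    (ha : a ∈ g (p' - 1) q') (ha2 : d2 a = 0) (hb : b ∈ g p' (q' - 1)) :
    P (α + d1 η + d2 ζ) β = P α β ∧ P α (β + d1 a + d2 b) = P α β := by

  have hne : ((-1 : ℂ) ^ (p - 1 + q + 1) ≠ 0) := by
    apply zpow_ne_zero; norm_num
  have hne2 : ((-1 : ℂ) ^ (p + q - 1 + 1) ≠ 0) := by
    apply zpow_ne_zero; norm_num
  have hne3 : ((-1 : ℂ) ^ (p + q + 1) ≠ 0) := by
    apply zpow_ne_zero; norm_num
  -- P (d1 η) β = 0
  have h1 : P (d1 η) β = 0 := by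
    have e1 := hP.stokes1 (p - 1) q η hη β
    have e2 := hP.stokes2 (p - 1) q η hη v
    rw [hη2, map_zero] at e2
    have : P η (d2 v) = 0 := by
      rcases mul_eq_zero.mp e2.symm with h | h
      · exact absurd h hne
      · exact h
    rw [e1, hβ1, this, mul_zero]
  -- P (d2 ζ) β = 0
  have h2 : P (d2 ζ) β = 0 := by
    have e1 := hP.stokes2 p (q - 1) ζ hζ β
    rw [e1, hβ2, map_zero, mul_zero]
  -- P α (d1 a) = 0
  have h3 : P α (d1 a) = 0 := by
    have e1 := hP.stokes1 p q α hα a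
    rw [hα1] at e1
    have e2 := hP.stokes2 (p + 1) (q - 1) u hu a
    rw [ha2, LinearMap.map_zero] at e2
    have : P α (d1 a) = 0 := by
      have : (-1 : ℂ) ^ (p + q + 1) * (P α) (d1 a) = 0 := by rw [← e1, e2, mul_zero]
      rcases mul_eq_zero.mp this with h | h
      · exact absurd h hne3
      · exact h
    exact this
  -- P α (d2 b) = 0
  have h4 : P α (d2 b) = 0 := by
    have e1 := hP.stokes2 p q α hα b
    rw [hα2, map_zero] at e1
    rcases mul_eq_zero.mp e1.symm with h | h
    · exact absurd h hne3
    · exact h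
  constructor
  · rw [map_add, map_add, LinearMap.add_apply, LinearMap.add_apply, h1, h2, add_zero,
      add_zero]
  · rw [map_add, map_add, h3, h4, add_zero, add_zero]


end Stmt0
end

section
/- Let X be a compact complex manifold of dimension n and fix r ≥ 1. If a (p,q)-form α is E_r-exact and a (n-p,n-q)-form β is E_r-closed, then ∫_X α∧β = 0. Consequently, the bilinear pairing E_r^{p,q}(X) × E_r^{n-p,n-q}(X) → ℂ given by ({α},{β}) ↦ ∫_X α∧β is well defined. -/
namespace Stmt2

variable {K : Type} [Field K] {V : Type} [AddCommGroup V] [Module K V]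

/-- A bigraded double complex structure on `V`: grading `g p q` (the `(p,q)`-forms),
`d1 = ∂`, `d2 = ∂̄`. -/
structure IsBigradedDC (g : ℤ → ℤ → Submodule K V) (d1 d2 : V →ₗ[K] V) : Prop where
  internal : DirectSum.IsInternal (fun pq : ℤ × ℤ => g pq.1 pq.2)
  d1_sq : ∀ v : V, d1 (d1 v) = 0
  d2_sq : ∀ v : V, d2 (d2 v) = 0
  anticomm : ∀ v : V, d1 (d2 v) + d2 (d1 v) = 0
  d1_mem : ∀ p q : ℤ, ∀ v ∈ g p q, d1 v ∈ g (p + 1) q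
  d2_mem : ∀ p q : ℤ, ∀ v ∈ g p q, d2 v ∈ g p (q + 1)

def transpose (g : ℤ → ℤ → Submodule K V) : ℤ → ℤ → Submodule K V := fun p q => g q p

/-- "`d1 x` runs at least `m` times": there are `u₁, …, u_m` with
`∂x = ∂̄u₁, ∂u₁ = ∂̄u₂, …, ∂u_{m-1} = ∂̄u_m` (here `u l` is `u_{l+1}`). -/
def RunsTimes (g : ℤ → ℤ → Submodule K V) (d1 d2 : V →ₗ[K] V) (m : ℕ) (p q : ℤ) (x : V) :
    Prop :=
  ∃ u : ℕ → V, (∀ l : ℕ, u l ∈ g (p + 1 + (l : ℤ)) (q - 1 - (l : ℤ))) ∧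
    (1 ≤ m → d1 x = d2 (u 0)) ∧ ∀ l : ℕ, l + 2 ≤ m → d1 (u l) = d2 (u (l + 1))

/-- `x` (a pure `(p,q)`-form) is `E_r`-closed. -/
def ErClosed (g : ℤ → ℤ → Submodule K V) (d1 d2 : V →ₗ[K] V) (r : ℕ) (p q : ℤ) (x : V) :
    Prop :=
  d2 x = 0 ∧ RunsTimes g d1 d2 (r - 1) p q x

/-- "`d2 z` reaches `0` in at most `m` steps":
`∂̄z = ∂v_{m-2}, ∂̄v_{m-2} = ∂v_{m-3}, …, ∂̄v₀ = 0` (here `v l` is `v_{m-2-l}`). -/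
def ReachesZero (g : ℤ → ℤ → Submodule K V) (d1 d2 : V →ₗ[K] V) (m : ℕ) (p q : ℤ) (z : V) :
    Prop :=
  ∃ v : ℕ → V, (∀ l : ℕ, v l ∈ g (p - 1 - (l : ℤ)) (q + 1 + (l : ℤ))) ∧
    (m = 1 → d2 z = 0) ∧
    (2 ≤ m → d2 z = d1 (v 0) ∧ d2 (v (m - 2)) = 0 ∧
      ∀ l : ℕ, l + 3 ≤ m → d2 (v l) = d1 (v (l + 1)))

/-- `x` (a pure `(p,q)`-form) is `E_r`-exact. -/
def ErExact (g : ℤ → ℤ → Submodule K V) (d1 d2 : V →ₗ[K] V) (r : ℕ) (p q : ℤ) (x : V) :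
    Prop :=
  ∃ z ξ : V, z ∈ g (p - 1) q ∧ ξ ∈ g p (q - 1) ∧ x = d1 z + d2 ξ ∧
    (r = 1 → z = 0) ∧ (2 ≤ r → ReachesZero g d1 d2 (r - 1) (p - 1) q z)

/-- `x` is `Ē_r`-exact (the conjugate notion: swap `∂` and `∂̄`, transpose the bigrading). -/
def ErBarExact (g : ℤ → ℤ → Submodule K V) (d1 d2 : V →ₗ[K] V) (r : ℕ) (p q : ℤ) (x : V) :
    Prop :=
  ErExact (transpose g) d2 d1 r q p x

/-- `x` is `E_rĒ_r`-closed: both `∂x` and `∂̄x` run at least `r-1` times. -/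
def ErErBarClosed (g : ℤ → ℤ → Submodule K V) (d1 d2 : V →ₗ[K] V) (r : ℕ) (p q : ℤ)
    (x : V) : Prop :=
  RunsTimes g d1 d2 (r - 1) p q x ∧ RunsTimes (transpose g) d2 d1 (r - 1) q p x

/-- `x` is `E_rĒ_r`-exact: `x = ∂z + ∂∂̄ξ + ∂̄η` with `∂̄z` and `∂η`
reaching `0` in at most `r-1` steps. -/
def ErErBarExact (g : ℤ → ℤ → Submodule K V) (d1 d2 : V →ₗ[K] V) (r : ℕ) (p q : ℤ)
    (x : V) : Prop :=
  ∃ z ξ η : V, z ∈ g (p - 1) q ∧ ξ ∈ g (p - 1) (q - 1) ∧ η ∈ g p (q - 1) ∧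
    x = d1 z + d1 (d2 ξ) + d2 η ∧
    (r = 1 → z = 0 ∧ η = 0) ∧
    (2 ≤ r → ReachesZero g d1 d2 (r - 1) (p - 1) q z ∧
      ReachesZero (transpose g) d2 d1 (r - 1) (q - 1) p η)

/-- The total-degree-`k` part of the complex. -/
def TotDeg (g : ℤ → ℤ → Submodule K V) (k : ℤ) : Submodule K V := ⨆ p : ℤ, g p (k - p)

/-- `x` (of total degree `k`) is `d`-exact. -/
def DExact (g : ℤ → ℤ → Submodule K V) (d1 d2 : V →ₗ[K] V) (k : ℤ) (x : V) : Prop :=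
  ∃ y ∈ TotDeg g (k - 1), x = d1 y + d2 y

/-- The De Rham cohomology in degree `k` is *full*: every `d`-closed form of total degree
`k` is, modulo `Im d`, a sum of `d`-closed pure-type forms. -/
def DRFull (g : ℤ → ℤ → Submodule K V) (d1 d2 : V →ₗ[K] V) (k : ℤ) : Prop :=
  ∀ x ∈ TotDeg g k, d1 x + d2 x = 0 →
    ∃ (s : Finset ℤ) (c : ℤ → V),
      (∀ p ∈ s, c p ∈ g p (k - p) ∧ d1 (c p) = 0 ∧ d2 (c p) = 0) ∧
      ∃ y ∈ TotDeg g (k - 1), x = (∑ p ∈ s, c p) + (d1 y + d2 y)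

/-- The De Rham cohomology in degree `k` is *pure*: the subspaces `H^{p,q}_{DR}` with
`p + q = k` are in direct sum. -/
def DRPureDeg (g : ℤ → ℤ → Submodule K V) (d1 d2 : V →ₗ[K] V) (k : ℤ) : Prop :=
  ∀ (s : Finset ℤ) (c : ℤ → V),
    (∀ p ∈ s, c p ∈ g p (k - p) ∧ d1 (c p) = 0 ∧ d2 (c p) = 0) →
    DExact g d1 d2 k (∑ p ∈ s, c p) → ∀ p ∈ s, DExact g d1 d2 k (c p)

/-- Purity of the De Rham cohomology: `H^k_{DR} = ⊕_{p+q=k} H^{p,q}_{DR}` for every `k`. -/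
def DRPure (g : ℤ → ℤ → Submodule K V) (d1 d2 : V →ₗ[K] V) : Prop :=
  (∀ k : ℤ, DRFull g d1 d2 k) ∧ ∀ k : ℤ, DRPureDeg g d1 d2 k

/-- The (column) Frölicher spectral sequence degenerates at `E_r`: from page `r` on, the
spaces of `E_s`-closed and `E_s`-exact pure-type forms stabilise. -/
def DegenAt (g : ℤ → ℤ → Submodule K V) (d1 d2 : V →ₗ[K] V) (r : ℕ) : Prop :=
  ∀ s : ℕ, r ≤ s → ∀ p q : ℤ, ∀ x ∈ g p q,
    (ErClosed g d1 d2 s p q x ↔ ErClosed g d1 d2 (s + 1) p q x) ∧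
    (ErExact g d1 d2 s p q x ↔ ErExact g d1 d2 (s + 1) p q x)

/-- `X` is a page-`r`-`∂∂̄`-manifold: the Frölicher spectral sequence degenerates at
`E_{r+1}` and the De Rham cohomology is pure. -/
def PageDdbar (g : ℤ → ℤ → Submodule K V) (d1 d2 : V →ₗ[K] V) (r : ℕ) : Prop :=
  DegenAt g d1 d2 (r + 1) ∧ DRPure g d1 d2

/-- Dimension of a subquotient `Nm / (Dn ∩ Nm)`. -/
noncomputable def hdim (Nm Dn : Submodule K V) : ℕ :=
  Module.finrank K (↥Nm ⧸ (Dn.comap Nm.subtype))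

/-- Stokes / integration-by-parts laws for the pairing `P α β = ∫_X α ∧ β` on a compact
complex `n`-dimensional manifold. -/
structure StokesPairing (g : ℤ → ℤ → Submodule K V) (d1 d2 : V →ₗ[K] V)
    (P : V →ₗ[K] V →ₗ[K] K) : Prop where
  stokes1 : ∀ p q : ℤ, ∀ x ∈ g p q, ∀ y : V,
    P (d1 x) y = (-1 : K) ^ (p + q + 1) * P x (d1 y)
  stokes2 : ∀ p q : ℤ, ∀ x ∈ g p q, ∀ y : V,
    P (d2 x) y = (-1 : K) ^ (p + q + 1) * P x (d2 y)

/-- Let `X` be a compact complex `n`-dimensional manifold, `r ≥ 1`.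
If the `(p,q)`-form `α` is `E_r`-exact and the `(n-p,n-q)`-form `β` is `E_r`-closed, then
`∫_X α ∧ β = 0`.  Consequently the pairing
`E_r^{p,q} × E_r^{n-p,n-q} → ℂ`, `({α}_{E_r}, {β}_{E_r}) ↦ ∫_X α ∧ β` is well defined. -/
theorem statement2 {W : Type} [AddCommGroup W] [Module ℂ W]
    (g : ℤ → ℤ → Submodule ℂ W) (d1 d2 : W →ₗ[ℂ] W)
    (hdc : IsBigradedDC g d1 d2) (n : ℤ) (P : W →ₗ[ℂ] W →ₗ[ℂ] ℂ)
    (hP : StokesPairing g d1 d2 P)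
    (r : ℕ) (hr : 1 ≤ r) (p q : ℤ) (α β : W)
    (hα : α ∈ g p q) (hαx : ErExact g d1 d2 r p q α)
    (hβ : β ∈ g (n - p) (n - q)) (hβc : ErClosed g d1 d2 r (n - p) (n - q) β) :
    P α β = 0 := by
  obtain ⟨z, ξ, hz, hξ, hαeq, hz1, hz2⟩ := hαx
  obtain ⟨hβ2, u, hu, hu0, huc⟩ := hβc
  subst hαeq
  rw [map_add, LinearMap.add_apply]
  have h2 : P (d2 ξ) β = 0 := by
    rw [hP.stokes2 p (q - 1) ξ hξ β, hβ2, map_zero, mul_zero]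
  have h1 : P (d1 z) β = 0 := by
    by_cases hr1 : r = 1
    · rw [hz1 hr1]; simp
    · have hr2 : 2 ≤ r := by omega
      obtain ⟨v, hv, hv1, hv2⟩ := hz2 hr2
      rw [hP.stokes1 (p - 1) q z hz β, hu0 (by omega), ← hP.stokes2 (p - 1) q z hz (u 0)]
      by_cases hrr : r = 2
      · rw [hv1 (by omega)]; simp
      · obtain ⟨hzv, hvend, hvchain⟩ := hv2 (by omega)
        rw [hzv]
        have claim : ∀ k l : ℕ, l + k = r - 1 - 2 → P (d1 (v l)) (u l) = 0 := by
          intro k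
          induction k with
          | zero =>
            intro l hl
            rw [hP.stokes1 (p - 1 - 1 - (l : ℤ)) (q + 1 + (l : ℤ)) (v l) (hv l) (u l),
              huc l (by omega),
              ← hP.stokes2 (p - 1 - 1 - (l : ℤ)) (q + 1 + (l : ℤ)) (v l) (hv l) (u (l + 1))]
            have hl' : l = r - 1 - 2 := by omega
            rw [hl', hvend]
            simp
          | succ k ih =>
            intro l hl
            rw [hP.stokes1 (p - 1 - 1 - (l : ℤ)) (q + 1 + (l : ℤ)) (v l) (hv l) (u l),
              huc l (by omega),
              ← hP.stokes2 (p - 1 - 1 - (l : ℤ)) (q + 1 + (l : ℤ)) (v l) (hv l) (u (l + 1)),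
              hvchain l (by omega)]
            rw [ih (l + 1) (by omega)]
        rw [claim (r - 1 - 2) 0 (by omega)]
  rw [h1, h2, add_zero]

end Stmt2
end

section
/- Let X be a compact complex manifold whose De Rham cohomology is pure. Then for every p ≤ k, F^p H^k_{DR}(X,ℂ) = ⊕_{i ≥ p} H^{i,k-i}_{DR}(X), where F^p H^k_{DR} is the Hodge filtration (classes representable by forms with all components of holomorphic degree ≥ p). -/
/-!
By fullness, a `d`-closed form of `F^p` is `∑ᵢ cᵢ + d y` with each `cᵢ` a `d`-closed form of
pure type `(i, k - i)`. Its components of holomorphic degree `< p` vanish, and projecting onto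
them yields `∑_{i<p} cᵢ = ∂ y_{p-1, k-p} - d (y_{<p})`, since `∂̄` preserves and `∂` raises the
holomorphic degree. Here `∂ y_{p-1, k-p}` is a `d`-closed pure `(p, k - p)`-form, so purity of
`H^k_{DR}` makes `∑_{i<p} cᵢ` exact, and what is left is `∑_{i≥p} cᵢ` modulo `Im d`.
-/

namespace Stmt4

variable {K : Type} [Field K] {V : Type} [AddCommGroup V] [Module K V]

/-- A bigraded double complex structure on `V`: grading `g p q` (the `(p,q)`-forms),
`d1 = ∂`, `d2 = ∂̄`. -/
structure IsBigradedDC (g : ℤ → ℤ → Submodule K V) (d1 d2 : V →ₗ[K] V) : Prop where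
  internal : DirectSum.IsInternal (fun pq : ℤ × ℤ => g pq.1 pq.2)
  d1_sq : ∀ v : V, d1 (d1 v) = 0
  d2_sq : ∀ v : V, d2 (d2 v) = 0
  anticomm : ∀ v : V, d1 (d2 v) + d2 (d1 v) = 0
  d1_mem : ∀ p q : ℤ, ∀ v ∈ g p q, d1 v ∈ g (p + 1) q
  d2_mem : ∀ p q : ℤ, ∀ v ∈ g p q, d2 v ∈ g p (q + 1)

def transpose (g : ℤ → ℤ → Submodule K V) : ℤ → ℤ → Submodule K V := fun p q => g q p

/-- "`d1 x` runs at least `m` times": there are `u₁, …, u_m` with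
`∂x = ∂̄u₁, ∂u₁ = ∂̄u₂, …, ∂u_{m-1} = ∂̄u_m` (here `u l` is `u_{l+1}`). -/
def RunsTimes (g : ℤ → ℤ → Submodule K V) (d1 d2 : V →ₗ[K] V) (m : ℕ) (p q : ℤ) (x : V) :
    Prop :=
  ∃ u : ℕ → V, (∀ l : ℕ, u l ∈ g (p + 1 + (l : ℤ)) (q - 1 - (l : ℤ))) ∧
    (1 ≤ m → d1 x = d2 (u 0)) ∧ ∀ l : ℕ, l + 2 ≤ m → d1 (u l) = d2 (u (l + 1))

/-- `x` (a pure `(p,q)`-form) is `E_r`-closed. -/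
def ErClosed (g : ℤ → ℤ → Submodule K V) (d1 d2 : V →ₗ[K] V) (r : ℕ) (p q : ℤ) (x : V) :
    Prop :=
  d2 x = 0 ∧ RunsTimes g d1 d2 (r - 1) p q x

/-- "`d2 z` reaches `0` in at most `m` steps":
`∂̄z = ∂v_{m-2}, ∂̄v_{m-2} = ∂v_{m-3}, …, ∂̄v₀ = 0` (here `v l` is `v_{m-2-l}`). -/
def ReachesZero (g : ℤ → ℤ → Submodule K V) (d1 d2 : V →ₗ[K] V) (m : ℕ) (p q : ℤ) (z : V) :
    Prop :=
  ∃ v : ℕ → V, (∀ l : ℕ, v l ∈ g (p - 1 - (l : ℤ)) (q + 1 + (l : ℤ))) ∧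
    (m = 1 → d2 z = 0) ∧
    (2 ≤ m → d2 z = d1 (v 0) ∧ d2 (v (m - 2)) = 0 ∧
      ∀ l : ℕ, l + 3 ≤ m → d2 (v l) = d1 (v (l + 1)))

/-- `x` (a pure `(p,q)`-form) is `E_r`-exact. -/
def ErExact (g : ℤ → ℤ → Submodule K V) (d1 d2 : V →ₗ[K] V) (r : ℕ) (p q : ℤ) (x : V) :
    Prop :=
  ∃ z ξ : V, z ∈ g (p - 1) q ∧ ξ ∈ g p (q - 1) ∧ x = d1 z + d2 ξ ∧
    (r = 1 → z = 0) ∧ (2 ≤ r → ReachesZero g d1 d2 (r - 1) (p - 1) q z)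

/-- `x` is `Ē_r`-exact (the conjugate notion: swap `∂` and `∂̄`, transpose the bigrading). -/
def ErBarExact (g : ℤ → ℤ → Submodule K V) (d1 d2 : V →ₗ[K] V) (r : ℕ) (p q : ℤ) (x : V) :
    Prop :=
  ErExact (transpose g) d2 d1 r q p x

/-- `x` is `E_rĒ_r`-closed: both `∂x` and `∂̄x` run at least `r-1` times. -/
def ErErBarClosed (g : ℤ → ℤ → Submodule K V) (d1 d2 : V →ₗ[K] V) (r : ℕ) (p q : ℤ)
    (x : V) : Prop :=
  RunsTimes g d1 d2 (r - 1) p q x ∧ RunsTimes (transpose g) d2 d1 (r - 1) q p x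

/-- `x` is `E_rĒ_r`-exact: `x = ∂z + ∂∂̄ξ + ∂̄η` with `∂̄z` and `∂η`
reaching `0` in at most `r-1` steps. -/
def ErErBarExact (g : ℤ → ℤ → Submodule K V) (d1 d2 : V →ₗ[K] V) (r : ℕ) (p q : ℤ)
    (x : V) : Prop :=
  ∃ z ξ η : V, z ∈ g (p - 1) q ∧ ξ ∈ g (p - 1) (q - 1) ∧ η ∈ g p (q - 1) ∧
    x = d1 z + d1 (d2 ξ) + d2 η ∧
    (r = 1 → z = 0 ∧ η = 0) ∧
    (2 ≤ r → ReachesZero g d1 d2 (r - 1) (p - 1) q z ∧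
      ReachesZero (transpose g) d2 d1 (r - 1) (q - 1) p η)

/-- The total-degree-`k` part of the complex. -/
def TotDeg (g : ℤ → ℤ → Submodule K V) (k : ℤ) : Submodule K V := ⨆ p : ℤ, g p (k - p)

/-- `x` (of total degree `k`) is `d`-exact. -/
def DExact (g : ℤ → ℤ → Submodule K V) (d1 d2 : V →ₗ[K] V) (k : ℤ) (x : V) : Prop :=
  ∃ y ∈ TotDeg g (k - 1), x = d1 y + d2 y

/-- The De Rham cohomology in degree `k` is *full*: every `d`-closed form of total degree
`k` is, modulo `Im d`, a sum of `d`-closed pure-type forms. -/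
def DRFull (g : ℤ → ℤ → Submodule K V) (d1 d2 : V →ₗ[K] V) (k : ℤ) : Prop :=
  ∀ x ∈ TotDeg g k, d1 x + d2 x = 0 →
    ∃ (s : Finset ℤ) (c : ℤ → V),
      (∀ p ∈ s, c p ∈ g p (k - p) ∧ d1 (c p) = 0 ∧ d2 (c p) = 0) ∧
      ∃ y ∈ TotDeg g (k - 1), x = (∑ p ∈ s, c p) + (d1 y + d2 y)

/-- The De Rham cohomology in degree `k` is *pure*: the subspaces `H^{p,q}_{DR}` with
`p + q = k` are in direct sum. -/
def DRPureDeg (g : ℤ → ℤ → Submodule K V) (d1 d2 : V →ₗ[K] V) (k : ℤ) : Prop :=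
  ∀ (s : Finset ℤ) (c : ℤ → V),
    (∀ p ∈ s, c p ∈ g p (k - p) ∧ d1 (c p) = 0 ∧ d2 (c p) = 0) →
    DExact g d1 d2 k (∑ p ∈ s, c p) → ∀ p ∈ s, DExact g d1 d2 k (c p)

/-- Purity of the De Rham cohomology: `H^k_{DR} = ⊕_{p+q=k} H^{p,q}_{DR}` for every `k`. -/
def DRPure (g : ℤ → ℤ → Submodule K V) (d1 d2 : V →ₗ[K] V) : Prop :=
  (∀ k : ℤ, DRFull g d1 d2 k) ∧ ∀ k : ℤ, DRPureDeg g d1 d2 k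

/-- The (column) Frölicher spectral sequence degenerates at `E_r`: from page `r` on, the
spaces of `E_s`-closed and `E_s`-exact pure-type forms stabilise. -/
def DegenAt (g : ℤ → ℤ → Submodule K V) (d1 d2 : V →ₗ[K] V) (r : ℕ) : Prop :=
  ∀ s : ℕ, r ≤ s → ∀ p q : ℤ, ∀ x ∈ g p q,
    (ErClosed g d1 d2 s p q x ↔ ErClosed g d1 d2 (s + 1) p q x) ∧
    (ErExact g d1 d2 s p q x ↔ ErExact g d1 d2 (s + 1) p q x)

/-- `X` is a page-`r`-`∂∂̄`-manifold: the Frölicher spectral sequence degenerates at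
`E_{r+1}` and the De Rham cohomology is pure. -/
def PageDdbar (g : ℤ → ℤ → Submodule K V) (d1 d2 : V →ₗ[K] V) (r : ℕ) : Prop :=
  DegenAt g d1 d2 (r + 1) ∧ DRPure g d1 d2

/-- Dimension of a subquotient `Nm / (Dn ∩ Nm)`. -/
noncomputable def hdim (Nm Dn : Submodule K V) : ℕ :=
  Module.finrank K (↥Nm ⧸ (Dn.comap Nm.subtype))

section FilterProj

variable {ι : Type*} [DecidableEq ι] {A : ι → Submodule K V}

open scoped Classical in
noncomputable def filterProj (hA : DirectSum.IsInternal A) (P : ι → Prop) : V →ₗ[K] V :=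
  DirectSum.coeLinearMap A ∘ₗ DFinsupp.filterLinearMap K (fun i => A i) P ∘ₗ
    (LinearEquiv.ofBijective (DirectSum.coeLinearMap A) hA).symm.toLinearMap

open scoped Classical in
theorem filterProj_of_mem (hA : DirectSum.IsInternal A) (P : ι → Prop) {i : ι} {v : V}
    (hv : v ∈ A i) : filterProj hA P v = if P i then v else 0 := by
  have hdecomp : (LinearEquiv.ofBijective (DirectSum.coeLinearMap A) hA).symm v =
      DirectSum.of (fun i => A i) i ⟨v, hv⟩ := by
    rw [LinearEquiv.symm_apply_eq]
    exact (DirectSum.coeLinearMap_of A i ⟨v, hv⟩).symm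
  simp only [filterProj, LinearMap.coe_comp, Function.comp_apply, LinearEquiv.coe_coe, hdecomp]
  change DirectSum.coeLinearMap A (DFinsupp.filter P (DFinsupp.single i _)) = _
  rw [DFinsupp.filter_single]
  split_ifs
  · exact DirectSum.coeLinearMap_of A i _
  · exact map_zero _

theorem _root_.DirectSum.IsInternal.linearMap_ext {V' : Type*} [AddCommGroup V'] [Module K V']
    (hA : DirectSum.IsInternal A) {f f' : V →ₗ[K] V'}
    (h : ∀ i, ∀ v ∈ A i, f v = f' v) : f = f' :=
  LinearMap.eqLocus_eq_top.mp <| top_le_iff.mp <|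
    hA.submodule_iSup_eq_top ▸ iSup_le fun i v hv => h i v hv

end FilterProj

def HodgeFiltration (g : ℤ → ℤ → Submodule K V) (k p : ℤ) : Submodule K V :=
  ⨆ i : ℤ, ⨆ (_ : p ≤ i), g i (k - i)

theorem hodgeFiltration_le_totDeg (g : ℤ → ℤ → Submodule K V) (k p : ℤ) :
    HodgeFiltration g k p ≤ TotDeg g k :=
  iSup₂_le fun i _ => le_iSup (fun j => g j (k - j)) i

theorem dExact_iff_mem_map {g : ℤ → ℤ → Submodule K V} {d1 d2 : V →ₗ[K] V} {k : ℤ} {x : V} :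
    DExact g d1 d2 k x ↔ x ∈ (TotDeg g (k - 1)).map (d1 + d2) :=
  exists_congr fun _ => and_congr_right fun _ => eq_comm

section LowProj

variable {g : ℤ → ℤ → Submodule K V} {d1 d2 : V →ₗ[K] V}

theorem IsBigradedDC.total_sq_apply (hdc : IsBigradedDC g d1 d2) (y : V) :
    (d1 + d2) ((d1 + d2) y) = 0 := by
  simp only [LinearMap.add_apply, map_add, hdc.d1_sq, hdc.d2_sq]
  linear_combination (norm := abel) hdc.anticomm y

noncomputable def lowProj (hdc : IsBigradedDC g d1 d2) (p : ℤ) : V →ₗ[K] V :=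
  filterProj hdc.internal fun ij => ij.1 < p

variable (hdc : IsBigradedDC g d1 d2)

theorem lowProj_of_mem (p : ℤ) {i j : ℤ} {v : V} (hv : v ∈ g i j) :
    lowProj hdc p v = if i < p then v else 0 := by
  rw [lowProj, filterProj_of_mem hdc.internal _ (i := (i, j)) hv]
  congr

theorem lowProj_d1 (p : ℤ) (v : V) : lowProj hdc p (d1 v) = d1 (lowProj hdc (p - 1) v) := by
  suffices lowProj hdc p ∘ₗ d1 = d1 ∘ₗ lowProj hdc (p - 1) from LinearMap.congr_fun this v
  refine hdc.internal.linearMap_ext fun ij v hv => ?_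
  simp only [LinearMap.comp_apply, lowProj_of_mem hdc _ hv,
    lowProj_of_mem hdc _ (hdc.d1_mem _ _ v hv)]
  split_ifs <;> first | rfl | omega | simp

theorem lowProj_d2 (p : ℤ) (v : V) : lowProj hdc p (d2 v) = d2 (lowProj hdc p v) := by
  suffices lowProj hdc p ∘ₗ d2 = d2 ∘ₗ lowProj hdc p from LinearMap.congr_fun this v
  refine hdc.internal.linearMap_ext fun ij v hv => ?_
  simp only [LinearMap.comp_apply, lowProj_of_mem hdc _ hv,
    lowProj_of_mem hdc _ (hdc.d2_mem _ _ v hv)]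
  split_ifs <;> simp

theorem lowProj_mem_totDeg (p k : ℤ) {y : V} (hy : y ∈ TotDeg g k) :
    lowProj hdc p y ∈ TotDeg g k := by
  refine (iSup_le fun i v hv => ?_ : TotDeg g k ≤ (TotDeg g k).comap (lowProj hdc p)) hy
  rw [Submodule.mem_comap, lowProj_of_mem hdc p hv]
  split_ifs
  · exact Submodule.mem_iSup_of_mem i hv
  · exact Submodule.zero_mem _

theorem lowProj_eq_zero_of_mem_hodgeFiltration {k p : ℤ} {x : V}
    (hx : x ∈ HodgeFiltration g k p) : lowProj hdc p x = 0 := by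
  refine (iSup₂_le fun i hi v hv => ?_ :
    HodgeFiltration g k p ≤ LinearMap.ker (lowProj hdc p)) hx
  rw [LinearMap.mem_ker, lowProj_of_mem hdc p hv, if_neg (not_lt.mpr hi)]

theorem lowProj_sub_lowProj_mem {k p : ℤ} {y : V} (hy : y ∈ TotDeg g (k - 1)) :
    lowProj hdc (p - 1) y - lowProj hdc p y ∈ g (p - 1) (k - p) := by
  refine (iSup_le fun i v hv => ?_ :
    TotDeg g (k - 1) ≤ (g (p - 1) (k - p)).comap (lowProj hdc (p - 1) - lowProj hdc p)) hy
  rw [Submodule.mem_comap, LinearMap.sub_apply, lowProj_of_mem hdc _ hv, lowProj_of_mem hdc _ hv]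
  split_ifs with h1 h2
  · simp
  · omega
  · obtain rfl : i = p - 1 := by omega
    rw [zero_sub, show k - 1 - (p - 1) = k - p by ring] at *
    exact Submodule.neg_mem _ hv
  · simp

theorem lowProj_sum (p : ℤ) {k : ℤ} {s : Finset ℤ} {c : ℤ → V}
    (hc : ∀ i ∈ s, c i ∈ g i (k - i)) :
    lowProj hdc p (∑ i ∈ s, c i) = ∑ i ∈ s with i < p, c i := by
  rw [map_sum, Finset.sum_filter]
  exact Finset.sum_congr rfl fun i hi => lowProj_of_mem hdc p (hc i hi)

end LowProj

section Purity

variable {g : ℤ → ℤ → Submodule K V} {d1 d2 : V →ₗ[K] V} {k : ℤ}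

theorem IsBigradedDC.dClosed_of_dExact (hdc : IsBigradedDC g d1 d2) {x : V}
    (hx : DExact g d1 d2 k x) : d1 x + d2 x = 0 := by
  obtain ⟨y, -, rfl⟩ := hx
  exact hdc.total_sq_apply y

theorem DRPureDeg.dExact_sum_of_dExact_sum_add (hdc : IsBigradedDC g d1 d2)
    (hpure : DRPureDeg g d1 d2 k) {p : ℤ} {t : Finset ℤ} (hpt : p ∉ t) {c : ℤ → V}
    (hc : ∀ i ∈ t, c i ∈ g i (k - i) ∧ d1 (c i) = 0 ∧ d2 (c i) = 0)
    {u : V} (hu : u ∈ g p (k - p)) (hd1u : d1 u = 0)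
    (hex : DExact g d1 d2 k (∑ i ∈ t, c i + u)) : DExact g d1 d2 k (∑ i ∈ t, c i) := by
  classical
  have hd2u : d2 u = 0 := by
    have hsum : ∑ i ∈ t, d1 (c i) + ∑ i ∈ t, d2 (c i) = 0 := by
      rw [← Finset.sum_add_distrib]
      exact Finset.sum_eq_zero fun i hi => by rw [(hc i hi).2.1, (hc i hi).2.2, add_zero]
    have := hdc.dClosed_of_dExact hex
    simp only [map_add, map_sum, hd1u] at this
    linear_combination (norm := abel) this - hsum
  have hc' : ∀ i ∈ insert p t, Function.update c p u i ∈ g i (k - i) ∧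
      d1 (Function.update c p u i) = 0 ∧ d2 (Function.update c p u i) = 0 := by
    intro i hi
    rcases Finset.mem_insert.mp hi with rfl | hit
    · simpa using ⟨hu, hd1u, hd2u⟩
    · rw [Function.update_of_ne (ne_of_mem_of_not_mem hit hpt)]
      exact hc i hit
  have hsum : ∑ i ∈ insert p t, Function.update c p u i = ∑ i ∈ t, c i + u := by
    rw [Finset.sum_insert hpt, Function.update_self, add_comm,
      Finset.sum_update_of_notMem hpt]
  have hexact := hpure _ _ hc' (hsum ▸ hex)
  rw [dExact_iff_mem_map]
  refine Submodule.sum_mem _ fun i hi => ?_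
  rw [← dExact_iff_mem_map, ← Function.update_of_ne (ne_of_mem_of_not_mem hi hpt) u c]
  exact hexact i (Finset.mem_insert_of_mem hi)

theorem dExact_sum_filter_lt_of_mem_hodgeFiltration (hdc : IsBigradedDC g d1 d2)
    (hpure : DRPureDeg g d1 d2 k) {p : ℤ} {s : Finset ℤ} {c : ℤ → V}
    (hc : ∀ i ∈ s, c i ∈ g i (k - i) ∧ d1 (c i) = 0 ∧ d2 (c i) = 0)
    {x y : V} (hx : x ∈ HodgeFiltration g k p) (hy : y ∈ TotDeg g (k - 1))
    (hxy : x = ∑ i ∈ s, c i + (d1 y + d2 y)) :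
    DExact g d1 d2 k (∑ i ∈ s with i < p, c i) := by
  have hlow :
      ∑ i ∈ s with i < p, c i + d1 (lowProj hdc (p - 1) y) + d2 (lowProj hdc p y) = 0 := by
    have := congrArg (lowProj hdc p) hxy
    rwa [lowProj_eq_zero_of_mem_hodgeFiltration hdc hx, map_add, lowProj_sum hdc p fun i hi =>
      (hc i hi).1, map_add, lowProj_d1, lowProj_d2, eq_comm, ← add_assoc] at this
  set a := lowProj hdc (p - 1) y - lowProj hdc p y
  have ha : a ∈ g (p - 1) (k - p) := lowProj_sub_lowProj_mem hdc hy
  refine hpure.dExact_sum_of_dExact_sum_add hdc (p := p) (u := d1 a) (by simp)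
    (fun i hi => hc i (Finset.mem_filter.mp hi).1) ?_ (hdc.d1_sq a)
    ⟨-lowProj hdc p y, Submodule.neg_mem _ (lowProj_mem_totDeg hdc p _ hy), ?_⟩
  · simpa using hdc.d1_mem _ _ a ha
  · simp only [a, map_sub, map_neg]
    linear_combination (norm := abel) hlow

end Purity

theorem statement4_general {W : Type} [AddCommGroup W] [Module ℂ W]
    (g : ℤ → ℤ → Submodule ℂ W) (d1 d2 : W →ₗ[ℂ] W)
    (hdc : IsBigradedDC g d1 d2) (hpure : DRPure g d1 d2)
    (k p : ℤ) (x : W) :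
    (∃ x' ∈ (⨆ i : ℤ, ⨆ (_ : p ≤ i), g i (k - i)), d1 x' + d2 x' = 0 ∧
        ∃ y ∈ TotDeg g (k - 1), x - x' = d1 y + d2 y) ↔
      (∃ (s : Finset ℤ) (c : ℤ → W),
        (∀ i ∈ s, p ≤ i ∧ c i ∈ g i (k - i) ∧ d1 (c i) = 0 ∧ d2 (c i) = 0) ∧
        ∃ y ∈ TotDeg g (k - 1), x = (∑ i ∈ s, c i) + (d1 y + d2 y)) := by
  constructor
  · rintro ⟨x', hx', hx'cl, y₀, hy₀, hxx'⟩
    obtain ⟨s, c, hc, y, hy, hx'eq⟩ :=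
      hpure.1 k x' (hodgeFiltration_le_totDeg g k p hx') hx'cl
    obtain ⟨y₁, hy₁, hlow⟩ :=
      dExact_sum_filter_lt_of_mem_hodgeFiltration hdc (hpure.2 k) hc hx' hy hx'eq
    refine ⟨s.filter (p ≤ ·), c, fun i hi => ?_, y₀ + y + y₁,
      add_mem (add_mem hy₀ hy) hy₁, ?_⟩
    · obtain ⟨his, hpi⟩ := Finset.mem_filter.mp hi
      exact ⟨hpi, hc i his⟩
    · have hsplit := Finset.sum_filter_add_sum_filter_not s (p ≤ ·) c
      simp only [not_le] at hsplit
      rw [← sub_add_cancel x x', hxx', hx'eq, ← hsplit, hlow]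
      simp only [map_add]
      abel
  · rintro ⟨s, c, hc, y, hy, rfl⟩
    refine ⟨∑ i ∈ s, c i, Submodule.sum_mem _ fun i hi => ?_, ?_, y, hy, add_sub_cancel_left _ _⟩
    · exact Submodule.mem_iSup_of_mem i (Submodule.mem_iSup_of_mem (hc i hi).1 (hc i hi).2.1)
    · rw [map_sum, map_sum, ← Finset.sum_add_distrib]
      exact Finset.sum_eq_zero fun i hi => by rw [(hc i hi).2.2.1, (hc i hi).2.2.2, add_zero]

/-- Let `X` be a compact complex manifold whose De Rham cohomology is
pure.  Then for every `p ≤ k`, `F^p H^k_{DR}(X,ℂ) = ⊕_{i ≥ p} H^{i,k-i}_{DR}(X)`: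
a `d`-closed `k`-form `x` represents a class in the Hodge filtration level `F^p`
(i.e. is cohomologous to a `d`-closed form all of whose components have holomorphic
degree `≥ p`) if and only if it is cohomologous to a sum of `d`-closed pure-type forms of
holomorphic degrees `≥ p`. -/
theorem statement4 {W : Type} [AddCommGroup W] [Module ℂ W]
    (g : ℤ → ℤ → Submodule ℂ W) (d1 d2 : W →ₗ[ℂ] W)
    (hdc : IsBigradedDC g d1 d2) (hpure : DRPure g d1 d2)
    (k p : ℤ) (hpk : p ≤ k) (x : W) (hx : x ∈ TotDeg g k) (hcl : d1 x + d2 x = 0) :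
    (∃ x' ∈ (⨆ i : ℤ, ⨆ (_ : p ≤ i), g i (k - i)), d1 x' + d2 x' = 0 ∧
        ∃ y ∈ TotDeg g (k - 1), x - x' = d1 y + d2 y) ↔
      (∃ (s : Finset ℤ) (c : ℤ → W),
        (∀ i ∈ s, p ≤ i ∧ c i ∈ g i (k - i) ∧ d1 (c i) = 0 ∧ d2 (c i) = 0) ∧
        ∃ y ∈ TotDeg g (k - 1), x = (∑ i ∈ s, c i) + (d1 y + d2 y)) :=
  statement4_general g d1 d2 hdc hpure k p x

end Stmt4
end

section
/- Let X be a compact complex manifold. For each k the conjugation-closed subspaces H^{p,q}_{DR}(X) satisfy: H^{p,q}_{DR}(X) = F^p H^k_{DR}(X,ℂ) ∩ conj(F^q H^k_{DR}(X,ℂ)) for all p+q = k. In particular, a De Rham class representable both by a form in F^p C^∞_k and by a form in the conjugate of F^q C^∞_k (p+q=k) is representable by a single pure (p,q)-form. -/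
namespace Stmt5

variable {K : Type} [Field K] {V : Type} [AddCommGroup V] [Module K V]

/-- A bigraded double complex structure on `V`: grading `g p q` (the `(p,q)`-forms),
`d1 = ∂`, `d2 = ∂̄`. -/
structure IsBigradedDC (g : ℤ → ℤ → Submodule K V) (d1 d2 : V →ₗ[K] V) : Prop where
  internal : DirectSum.IsInternal (fun pq : ℤ × ℤ => g pq.1 pq.2)
  d1_sq : ∀ v : V, d1 (d1 v) = 0
  d2_sq : ∀ v : V, d2 (d2 v) = 0
  anticomm : ∀ v : V, d1 (d2 v) + d2 (d1 v) = 0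
  d1_mem : ∀ p q : ℤ, ∀ v ∈ g p q, d1 v ∈ g (p + 1) q
  d2_mem : ∀ p q : ℤ, ∀ v ∈ g p q, d2 v ∈ g p (q + 1)

def transpose (g : ℤ → ℤ → Submodule K V) : ℤ → ℤ → Submodule K V := fun p q => g q p

/-- "`d1 x` runs at least `m` times": there are `u₁, …, u_m` with
`∂x = ∂̄u₁, ∂u₁ = ∂̄u₂, …, ∂u_{m-1} = ∂̄u_m` (here `u l` is `u_{l+1}`). -/
def RunsTimes (g : ℤ → ℤ → Submodule K V) (d1 d2 : V →ₗ[K] V) (m : ℕ) (p q : ℤ) (x : V) :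
    Prop :=
  ∃ u : ℕ → V, (∀ l : ℕ, u l ∈ g (p + 1 + (l : ℤ)) (q - 1 - (l : ℤ))) ∧
    (1 ≤ m → d1 x = d2 (u 0)) ∧ ∀ l : ℕ, l + 2 ≤ m → d1 (u l) = d2 (u (l + 1))

/-- `x` (a pure `(p,q)`-form) is `E_r`-closed. -/
def ErClosed (g : ℤ → ℤ → Submodule K V) (d1 d2 : V →ₗ[K] V) (r : ℕ) (p q : ℤ) (x : V) :
    Prop :=
  d2 x = 0 ∧ RunsTimes g d1 d2 (r - 1) p q x

/-- "`d2 z` reaches `0` in at most `m` steps":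
`∂̄z = ∂v_{m-2}, ∂̄v_{m-2} = ∂v_{m-3}, …, ∂̄v₀ = 0` (here `v l` is `v_{m-2-l}`). -/
def ReachesZero (g : ℤ → ℤ → Submodule K V) (d1 d2 : V →ₗ[K] V) (m : ℕ) (p q : ℤ) (z : V) :
    Prop :=
  ∃ v : ℕ → V, (∀ l : ℕ, v l ∈ g (p - 1 - (l : ℤ)) (q + 1 + (l : ℤ))) ∧
    (m = 1 → d2 z = 0) ∧
    (2 ≤ m → d2 z = d1 (v 0) ∧ d2 (v (m - 2)) = 0 ∧
      ∀ l : ℕ, l + 3 ≤ m → d2 (v l) = d1 (v (l + 1)))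

/-- `x` (a pure `(p,q)`-form) is `E_r`-exact. -/
def ErExact (g : ℤ → ℤ → Submodule K V) (d1 d2 : V →ₗ[K] V) (r : ℕ) (p q : ℤ) (x : V) :
    Prop :=
  ∃ z ξ : V, z ∈ g (p - 1) q ∧ ξ ∈ g p (q - 1) ∧ x = d1 z + d2 ξ ∧
    (r = 1 → z = 0) ∧ (2 ≤ r → ReachesZero g d1 d2 (r - 1) (p - 1) q z)

/-- `x` is `Ē_r`-exact (the conjugate notion: swap `∂` and `∂̄`, transpose the bigrading). -/
def ErBarExact (g : ℤ → ℤ → Submodule K V) (d1 d2 : V →ₗ[K] V) (r : ℕ) (p q : ℤ) (x : V) :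
    Prop :=
  ErExact (transpose g) d2 d1 r q p x

/-- `x` is `E_rĒ_r`-closed: both `∂x` and `∂̄x` run at least `r-1` times. -/
def ErErBarClosed (g : ℤ → ℤ → Submodule K V) (d1 d2 : V →ₗ[K] V) (r : ℕ) (p q : ℤ)
    (x : V) : Prop :=
  RunsTimes g d1 d2 (r - 1) p q x ∧ RunsTimes (transpose g) d2 d1 (r - 1) q p x

/-- `x` is `E_rĒ_r`-exact: `x = ∂z + ∂∂̄ξ + ∂̄η` with `∂̄z` and `∂η`
reaching `0` in at most `r-1` steps. -/
def ErErBarExact (g : ℤ → ℤ → Submodule K V) (d1 d2 : V →ₗ[K] V) (r : ℕ) (p q : ℤ)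
    (x : V) : Prop :=
  ∃ z ξ η : V, z ∈ g (p - 1) q ∧ ξ ∈ g (p - 1) (q - 1) ∧ η ∈ g p (q - 1) ∧
    x = d1 z + d1 (d2 ξ) + d2 η ∧
    (r = 1 → z = 0 ∧ η = 0) ∧
    (2 ≤ r → ReachesZero g d1 d2 (r - 1) (p - 1) q z ∧
      ReachesZero (transpose g) d2 d1 (r - 1) (q - 1) p η)

/-- The total-degree-`k` part of the complex. -/
def TotDeg (g : ℤ → ℤ → Submodule K V) (k : ℤ) : Submodule K V := ⨆ p : ℤ, g p (k - p)

/-- `x` (of total degree `k`) is `d`-exact. -/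
def DExact (g : ℤ → ℤ → Submodule K V) (d1 d2 : V →ₗ[K] V) (k : ℤ) (x : V) : Prop :=
  ∃ y ∈ TotDeg g (k - 1), x = d1 y + d2 y

/-- The De Rham cohomology in degree `k` is *full*: every `d`-closed form of total degree
`k` is, modulo `Im d`, a sum of `d`-closed pure-type forms. -/
def DRFull (g : ℤ → ℤ → Submodule K V) (d1 d2 : V →ₗ[K] V) (k : ℤ) : Prop :=
  ∀ x ∈ TotDeg g k, d1 x + d2 x = 0 →
    ∃ (s : Finset ℤ) (c : ℤ → V),
      (∀ p ∈ s, c p ∈ g p (k - p) ∧ d1 (c p) = 0 ∧ d2 (c p) = 0) ∧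
      ∃ y ∈ TotDeg g (k - 1), x = (∑ p ∈ s, c p) + (d1 y + d2 y)

/-- The De Rham cohomology in degree `k` is *pure*: the subspaces `H^{p,q}_{DR}` with
`p + q = k` are in direct sum. -/
def DRPureDeg (g : ℤ → ℤ → Submodule K V) (d1 d2 : V →ₗ[K] V) (k : ℤ) : Prop :=
  ∀ (s : Finset ℤ) (c : ℤ → V),
    (∀ p ∈ s, c p ∈ g p (k - p) ∧ d1 (c p) = 0 ∧ d2 (c p) = 0) →
    DExact g d1 d2 k (∑ p ∈ s, c p) → ∀ p ∈ s, DExact g d1 d2 k (c p)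

/-- Purity of the De Rham cohomology: `H^k_{DR} = ⊕_{p+q=k} H^{p,q}_{DR}` for every `k`. -/
def DRPure (g : ℤ → ℤ → Submodule K V) (d1 d2 : V →ₗ[K] V) : Prop :=
  (∀ k : ℤ, DRFull g d1 d2 k) ∧ ∀ k : ℤ, DRPureDeg g d1 d2 k

/-- The (column) Frölicher spectral sequence degenerates at `E_r`: from page `r` on, the
spaces of `E_s`-closed and `E_s`-exact pure-type forms stabilise. -/
def DegenAt (g : ℤ → ℤ → Submodule K V) (d1 d2 : V →ₗ[K] V) (r : ℕ) : Prop :=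
  ∀ s : ℕ, r ≤ s → ∀ p q : ℤ, ∀ x ∈ g p q,
    (ErClosed g d1 d2 s p q x ↔ ErClosed g d1 d2 (s + 1) p q x) ∧
    (ErExact g d1 d2 s p q x ↔ ErExact g d1 d2 (s + 1) p q x)

/-- `X` is a page-`r`-`∂∂̄`-manifold: the Frölicher spectral sequence degenerates at
`E_{r+1}` and the De Rham cohomology is pure. -/
def PageDdbar (g : ℤ → ℤ → Submodule K V) (d1 d2 : V →ₗ[K] V) (r : ℕ) : Prop :=
  DegenAt g d1 d2 (r + 1) ∧ DRPure g d1 d2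

/-- Dimension of a subquotient `Nm / (Dn ∩ Nm)`. -/
noncomputable def hdim (Nm Dn : Submodule K V) : ℕ :=
  Module.finrank K (↥Nm ⧸ (Dn.comap Nm.subtype))


section Aux
variable {W : Type} [AddCommGroup W] [Module ℂ W]
variable (g : ℤ → ℤ → Submodule ℂ W)

noncomputable def eqv (hint : DirectSum.IsInternal (fun pq : ℤ × ℤ => g pq.1 pq.2)) :
    (DirectSum (ℤ × ℤ) fun pq => g pq.1 pq.2) ≃ₗ[ℂ] W :=
  LinearEquiv.ofBijective (DirectSum.coeLinearMap fun pq : ℤ × ℤ => g pq.1 pq.2) hint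

/-- Projection onto the `(a,b)` component, given internal directness. -/
noncomputable def piL (hint : DirectSum.IsInternal (fun pq : ℤ × ℤ => g pq.1 pq.2))
    (a b : ℤ) : W →ₗ[ℂ] W :=
  (g a b).subtype ∘ₗ
    (DirectSum.component ℂ (ℤ × ℤ) (fun pq => (g pq.1 pq.2 : Submodule ℂ W)) (a, b)) ∘ₗ
    (eqv g hint).symm.toLinearMap

variable (hint : DirectSum.IsInternal (fun pq : ℤ × ℤ => g pq.1 pq.2))
include hint

theorem piL_apply (a b : ℤ) (v : W) :
    piL g hint a b v = (((eqv g hint).symm v) (a, b) : W) := rfl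

theorem piL_mem (a b : ℤ) (v : W) : piL g hint a b v ∈ g a b := by
  rw [piL_apply]; exact (((eqv g hint).symm v) (a, b)).2

theorem piL_same {a b : ℤ} {v : W} (hv : v ∈ g a b) : piL g hint a b v = v := by
  rw [piL_apply]
  have : ((eqv g hint).symm v) (a, b) = ⟨v, hv⟩ :=
    hint.ofBijective_coeLinearMap_of_mem (i := (a, b)) hv
  rw [this]

theorem piL_ne {a b a' b' : ℤ} {v : W} (hv : v ∈ g a' b') (hne : (a', b') ≠ (a, b)) :
    piL g hint a b v = 0 := by
  rw [piL_apply]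
  have : ((eqv g hint).symm v) (a, b) = 0 :=
    hint.ofBijective_coeLinearMap_of_mem_ne (j := (a, b)) hne hv
  rw [this]; rfl

theorem piL_recon (v : W) : ∃ t : Finset (ℤ × ℤ),
    v = ∑ pq ∈ t, piL g hint pq.1 pq.2 v := by
  classical
  refine ⟨((eqv g hint).symm v).support, ?_⟩
  conv_lhs => rw [← (eqv g hint).apply_symm_apply v,
    ← DirectSum.sum_support_of ((eqv g hint).symm v)]
  rw [show ((eqv g hint) (∑ pq ∈ ((eqv g hint).symm v).support,
      DirectSum.of (fun pq : ℤ × ℤ => g pq.1 pq.2) pq (((eqv g hint).symm v) pq))) =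
      (eqv g hint).toLinearMap (∑ pq ∈ ((eqv g hint).symm v).support,
      DirectSum.of (fun pq : ℤ × ℤ => g pq.1 pq.2) pq (((eqv g hint).symm v) pq)) from rfl,
    map_sum]
  refine Finset.sum_congr rfl fun pq _ => ?_
  rw [piL_apply]
  exact DirectSum.coeLinearMap_of _ pq _

/-- Membership in both filtration pieces forces pure type. -/
theorem inter_pure (p k : ℤ) {v : W}
    (h1 : v ∈ ⨆ i : ℤ, ⨆ (_ : p ≤ i), g i (k - i))
    (h2 : v ∈ ⨆ i : ℤ, ⨆ (_ : i ≤ p), g i (k - i)) :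
    v ∈ g p (k - p) := by
  classical
  have key : ∀ a b : ℤ, (a, b) ≠ (p, k - p) → piL g hint a b v = 0 := by
    intro a b hne
    have hne' : ¬ (a = p ∧ b = k - p) := by simpa [Prod.ext_iff] using hne
    by_cases hc : p ≤ a ∧ b = k - a
    · have hker : (⨆ i : ℤ, ⨆ (_ : i ≤ p), g i (k - i)) ≤
          LinearMap.ker (piL g hint a b) := by
        refine iSup_le fun i => iSup_le fun hip => fun u hu => ?_
        refine LinearMap.mem_ker.mpr (piL_ne g hint hu ?_)
        simp only [ne_eq, Prod.mk.injEq, not_and]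
        obtain ⟨hc1, hc2⟩ := hc
        omega
      exact hker h2
    · have hker : (⨆ i : ℤ, ⨆ (_ : p ≤ i), g i (k - i)) ≤
          LinearMap.ker (piL g hint a b) := by
        refine iSup_le fun i => iSup_le fun hip => fun u hu => ?_
        refine LinearMap.mem_ker.mpr (piL_ne g hint hu ?_)
        simp only [ne_eq, Prod.mk.injEq, not_and]
        rw [not_and_or] at hc
        omega
      exact hker h1
  obtain ⟨t, ht⟩ := piL_recon g hint v
  rw [ht]
  refine Submodule.sum_mem _ fun pq _ => ?_
  by_cases hpq : pq = (p, k - p)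
  · rw [hpq]; exact piL_mem g hint p (k - p) v
  · rw [key pq.1 pq.2 (by simpa using hpq)]; exact Submodule.zero_mem _

theorem pure_cancel {a b : W} {p1 q1 p2 q2 : ℤ} (ha : a ∈ g p1 q1) (hb : b ∈ g p2 q2)
    (hne : (p1, q1) ≠ (p2, q2)) (h : a + b = 0) : a = 0 ∧ b = 0 := by
  have h1 : piL g hint p1 q1 (a + b) = a := by
    rw [map_add, piL_same g hint ha,
      piL_ne g hint hb (by simp only [ne_eq, Prod.mk.injEq] at hne ⊢; tauto), add_zero]
  have h2 : a = 0 := by rw [← h1, h, map_zero]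
  exact ⟨h2, by rwa [h2, zero_add] at h⟩

end Aux

/-- On any compact complex manifold,
`H^{p,q}_{DR}(X) = F^p H^k_{DR}(X,ℂ) ∩ conj (F^q H^k_{DR}(X,ℂ))` for `p + q = k`:
a `d`-closed `k`-form represents a class which is representable by a single pure
`(p,q)`-form if and only if it is cohomologous both to a `d`-closed form with components
of holomorphic degrees `≥ p` (a representative in `F^p`) and to a `d`-closed form with
components of holomorphic degrees `≤ p` (a representative in the conjugate of `F^q`). -/
theorem statement5 {W : Type} [AddCommGroup W] [Module ℂ W]
    (g : ℤ → ℤ → Submodule ℂ W) (d1 d2 : W →ₗ[ℂ] W)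
    (hdc : IsBigradedDC g d1 d2)
    (k p q : ℤ) (hpq : p + q = k) (x : W) (hx : x ∈ TotDeg g k) (hcl : d1 x + d2 x = 0) :
    (∃ w ∈ g p q, d1 w = 0 ∧ d2 w = 0 ∧
        ∃ y ∈ TotDeg g (k - 1), x - w = d1 y + d2 y) ↔
      ((∃ x₁ ∈ (⨆ i : ℤ, ⨆ (_ : p ≤ i), g i (k - i)), d1 x₁ + d2 x₁ = 0 ∧
          ∃ y ∈ TotDeg g (k - 1), x - x₁ = d1 y + d2 y) ∧
        (∃ x₂ ∈ (⨆ i : ℤ, ⨆ (_ : i ≤ p), g i (k - i)), d1 x₂ + d2 x₂ = 0 ∧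
          ∃ y ∈ TotDeg g (k - 1), x - x₂ = d1 y + d2 y)) := by
  classical
  have hint := hdc.internal
  have hq : q = k - p := by omega
  constructor
  · rintro ⟨w, hw, h1, h2, y, hy, hxy⟩
    have hw' : w ∈ g p (k - p) := hq ▸ hw
    have hwcl : d1 w + d2 w = 0 := by rw [h1, h2, add_zero]
    constructor
    · exact ⟨w, Submodule.mem_iSup_of_mem p (Submodule.mem_iSup_of_mem le_rfl hw'),
        hwcl, y, hy, hxy⟩
    · exact ⟨w, Submodule.mem_iSup_of_mem p (Submodule.mem_iSup_of_mem le_rfl hw'),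
        hwcl, y, hy, hxy⟩
  · rintro ⟨⟨x₁, hx₁mem, hx₁cl, y₁, hy₁, hxy₁⟩, ⟨x₂, hx₂mem, hx₂cl, y₂, hy₂, hxy₂⟩⟩
    set σ : W := y₂ - y₁ with hσdef
    have hσ : σ ∈ TotDeg g (k - 1) := sub_mem hy₂ hy₁
    have hdσ : x₁ - x₂ = d1 σ + d2 σ := by
      have hstep : x₁ - x₂ = (x - x₂) - (x - x₁) := by abel
      rw [hstep, hxy₁, hxy₂, hσdef, map_sub, map_sub]
      abel
    obtain ⟨f, hf, hfsum⟩ := (Submodule.mem_iSup_iff_exists_finsupp _ _).mp hσ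
    set τ : W := ∑ i ∈ f.support.filter (fun i => p ≤ i), f i with hτdef
    set ρ : W := ∑ i ∈ f.support.filter (fun i => ¬ p ≤ i), f i with hρdef
    have hστ : τ + ρ = σ := by
      rw [hτdef, hρdef, Finset.sum_filter_add_sum_filter_not]
      exact hfsum
    set w : W := x₁ - (d1 τ + d2 τ) with hwdef
    -- w lies in F^{≥p}
    have hτge : d1 τ + d2 τ ∈ ⨆ i : ℤ, ⨆ (_ : p ≤ i), g i (k - i) := by
      refine add_mem ?_ ?_
      · rw [hτdef, map_sum]
        refine Submodule.sum_mem _ fun i hi => ?_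
        have hpi : p ≤ i := (Finset.mem_filter.mp hi).2
        have : d1 (f i) ∈ g (i + 1) (k - 1 - i) := hdc.d1_mem _ _ _ (hf i)
        have h' : d1 (f i) ∈ g (i + 1) (k - (i + 1)) := by
          rwa [show k - (i + 1) = k - 1 - i by ring]
        exact Submodule.mem_iSup_of_mem (i + 1) (Submodule.mem_iSup_of_mem (by omega) h')
      · rw [hτdef, map_sum]
        refine Submodule.sum_mem _ fun i hi => ?_
        have hpi : p ≤ i := (Finset.mem_filter.mp hi).2
        have : d2 (f i) ∈ g i (k - 1 - i + 1) := hdc.d2_mem _ _ _ (hf i)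
        have h' : d2 (f i) ∈ g i (k - i) := by
          rwa [show k - i = k - 1 - i + 1 by ring]
        exact Submodule.mem_iSup_of_mem i (Submodule.mem_iSup_of_mem hpi h')
    have hwge : w ∈ ⨆ i : ℤ, ⨆ (_ : p ≤ i), g i (k - i) := sub_mem hx₁mem hτge
    -- w = x₂ + dρ lies in F^{≤p}
    have hwρ : w = x₂ + (d1 ρ + d2 ρ) := by
      have hx₁' : x₁ = x₂ + (d1 σ + d2 σ) := by
        rw [← hdσ]; abel
      rw [hwdef, hx₁', ← hστ, map_add, map_add]
      abel
    have hwle : w ∈ ⨆ i : ℤ, ⨆ (_ : i ≤ p), g i (k - i) := by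
      rw [hwρ]
      refine add_mem hx₂mem (add_mem ?_ ?_)
      · rw [hρdef, map_sum]
        refine Submodule.sum_mem _ fun i hi => ?_
        have hpi : ¬ p ≤ i := (Finset.mem_filter.mp hi).2
        have : d1 (f i) ∈ g (i + 1) (k - 1 - i) := hdc.d1_mem _ _ _ (hf i)
        have h' : d1 (f i) ∈ g (i + 1) (k - (i + 1)) := by
          rwa [show k - (i + 1) = k - 1 - i by ring]
        exact Submodule.mem_iSup_of_mem (i + 1) (Submodule.mem_iSup_of_mem (by omega) h')
      · rw [hρdef, map_sum]
        refine Submodule.sum_mem _ fun i hi => ?_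
        have hpi : ¬ p ≤ i := (Finset.mem_filter.mp hi).2
        have : d2 (f i) ∈ g i (k - 1 - i + 1) := hdc.d2_mem _ _ _ (hf i)
        have h' : d2 (f i) ∈ g i (k - i) := by
          rwa [show k - i = k - 1 - i + 1 by ring]
        exact Submodule.mem_iSup_of_mem i (Submodule.mem_iSup_of_mem (by omega) h')
    have hwpure : w ∈ g p q := by
      rw [hq]; exact inter_pure g hint p k hwge hwle
    -- w is d-closed
    have hwcl : d1 w + d2 w = 0 := by
      have hexp : d1 w + d2 w = (d1 x₁ + d2 x₁) -
          (d1 (d1 τ) + (d1 (d2 τ) + d2 (d1 τ)) + d2 (d2 τ)) := by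
        rw [hwdef]
        simp only [map_sub, map_add]
        abel
      rw [hexp, hx₁cl, hdc.d1_sq, hdc.d2_sq, hdc.anticomm]
      abel
    have hd1w : d1 w ∈ g (p + 1) q := hdc.d1_mem _ _ _ hwpure
    have hd2w : d2 w ∈ g p (q + 1) := hdc.d2_mem _ _ _ hwpure
    have hcancel := pure_cancel g hint hd1w hd2w
      (by simp only [ne_eq, Prod.mk.injEq]; omega) hwcl
    refine ⟨w, hwpure, hcancel.1, hcancel.2, y₁ + τ, ?_, ?_⟩
    · refine add_mem hy₁ ?_
      rw [hτdef]
      exact Submodule.sum_mem _ fun i _ => Submodule.mem_iSup_of_mem i (hf i)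
    · rw [map_add, map_add]
      calc x - w = (x - x₁) + (d1 τ + d2 τ) := by rw [hwdef]; abel
        _ = (d1 y₁ + d2 y₁) + (d1 τ + d2 τ) := by rw [hxy₁]
        _ = d1 y₁ + d1 τ + (d2 y₁ + d2 τ) := by abel

end Stmt5
end

section
/- Let X be a compact complex manifold of dimension n and r ≥ 1. If a (p,q)-form α is E_rĒ_r-exact, then α is d-exact; explicitly, if α = ∂ζ + ∂∂̄ξ + ∂̄η with ∂̄ζ = ∂v_{r-3}, ∂̄v_{r-3} = ∂v_{r-4}, …, ∂̄v₀ = 0 and ∂η = ∂̄u_{r-3}, …, ∂u₀ = 0, then α = d[(ζ+η) + ∂̄ξ − w_{r-3} + ⋯ + (−1)^r w₀] where w_j = u_j + v_j. -/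
/-!
If `∂̄ζ = ∂v₀, ∂̄v₀ = ∂v₁, …, ∂̄v_N = 0`, then `w = Σ (-1)ˡ vₗ` satisfies `dw = ∂̄ζ`, since the
zigzag telescopes. Doing the same for the tower of `∂η` gives `w'` with `dw' = ∂η`, and then
`α = ∂ζ + ∂∂̄ξ + ∂̄η = d(ζ + η + ∂̄ξ - w - w')`.
-/

namespace Stmt14

variable {K : Type} [Field K] {V : Type} [AddCommGroup V] [Module K V]

/-- A bigraded double complex structure on `V`: grading `g p q` (the `(p,q)`-forms),
`d1 = ∂`, `d2 = ∂̄`. -/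
structure IsBigradedDC (g : ℤ → ℤ → Submodule K V) (d1 d2 : V →ₗ[K] V) : Prop where
  internal : DirectSum.IsInternal (fun pq : ℤ × ℤ => g pq.1 pq.2)
  d1_sq : ∀ v : V, d1 (d1 v) = 0
  d2_sq : ∀ v : V, d2 (d2 v) = 0
  anticomm : ∀ v : V, d1 (d2 v) + d2 (d1 v) = 0
  d1_mem : ∀ p q : ℤ, ∀ v ∈ g p q, d1 v ∈ g (p + 1) q
  d2_mem : ∀ p q : ℤ, ∀ v ∈ g p q, d2 v ∈ g p (q + 1)

def transpose (g : ℤ → ℤ → Submodule K V) : ℤ → ℤ → Submodule K V := fun p q => g q p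

/-- "`d1 x` runs at least `m` times": there are `u₁, …, u_m` with
`∂x = ∂̄u₁, ∂u₁ = ∂̄u₂, …, ∂u_{m-1} = ∂̄u_m` (here `u l` is `u_{l+1}`). -/
def RunsTimes (g : ℤ → ℤ → Submodule K V) (d1 d2 : V →ₗ[K] V) (m : ℕ) (p q : ℤ) (x : V) :
    Prop :=
  ∃ u : ℕ → V, (∀ l : ℕ, u l ∈ g (p + 1 + (l : ℤ)) (q - 1 - (l : ℤ))) ∧
    (1 ≤ m → d1 x = d2 (u 0)) ∧ ∀ l : ℕ, l + 2 ≤ m → d1 (u l) = d2 (u (l + 1))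

/-- `x` (a pure `(p,q)`-form) is `E_r`-closed. -/
def ErClosed (g : ℤ → ℤ → Submodule K V) (d1 d2 : V →ₗ[K] V) (r : ℕ) (p q : ℤ) (x : V) :
    Prop :=
  d2 x = 0 ∧ RunsTimes g d1 d2 (r - 1) p q x

/-- "`d2 z` reaches `0` in at most `m` steps":
`∂̄z = ∂v_{m-2}, ∂̄v_{m-2} = ∂v_{m-3}, …, ∂̄v₀ = 0` (here `v l` is `v_{m-2-l}`). -/
def ReachesZero (g : ℤ → ℤ → Submodule K V) (d1 d2 : V →ₗ[K] V) (m : ℕ) (p q : ℤ) (z : V) :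
    Prop :=
  ∃ v : ℕ → V, (∀ l : ℕ, v l ∈ g (p - 1 - (l : ℤ)) (q + 1 + (l : ℤ))) ∧
    (m = 1 → d2 z = 0) ∧
    (2 ≤ m → d2 z = d1 (v 0) ∧ d2 (v (m - 2)) = 0 ∧
      ∀ l : ℕ, l + 3 ≤ m → d2 (v l) = d1 (v (l + 1)))

/-- `x` (a pure `(p,q)`-form) is `E_r`-exact. -/
def ErExact (g : ℤ → ℤ → Submodule K V) (d1 d2 : V →ₗ[K] V) (r : ℕ) (p q : ℤ) (x : V) :
    Prop :=
  ∃ z ξ : V, z ∈ g (p - 1) q ∧ ξ ∈ g p (q - 1) ∧ x = d1 z + d2 ξ ∧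
    (r = 1 → z = 0) ∧ (2 ≤ r → ReachesZero g d1 d2 (r - 1) (p - 1) q z)

/-- `x` is `Ē_r`-exact (the conjugate notion: swap `∂` and `∂̄`, transpose the bigrading). -/
def ErBarExact (g : ℤ → ℤ → Submodule K V) (d1 d2 : V →ₗ[K] V) (r : ℕ) (p q : ℤ) (x : V) :
    Prop :=
  ErExact (transpose g) d2 d1 r q p x

/-- `x` is `E_rĒ_r`-closed: both `∂x` and `∂̄x` run at least `r-1` times. -/
def ErErBarClosed (g : ℤ → ℤ → Submodule K V) (d1 d2 : V →ₗ[K] V) (r : ℕ) (p q : ℤ)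
    (x : V) : Prop :=
  RunsTimes g d1 d2 (r - 1) p q x ∧ RunsTimes (transpose g) d2 d1 (r - 1) q p x

/-- `x` is `E_rĒ_r`-exact: `x = ∂z + ∂∂̄ξ + ∂̄η` with `∂̄z` and `∂η`
reaching `0` in at most `r-1` steps. -/
def ErErBarExact (g : ℤ → ℤ → Submodule K V) (d1 d2 : V →ₗ[K] V) (r : ℕ) (p q : ℤ)
    (x : V) : Prop :=
  ∃ z ξ η : V, z ∈ g (p - 1) q ∧ ξ ∈ g (p - 1) (q - 1) ∧ η ∈ g p (q - 1) ∧
    x = d1 z + d1 (d2 ξ) + d2 η ∧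
    (r = 1 → z = 0 ∧ η = 0) ∧
    (2 ≤ r → ReachesZero g d1 d2 (r - 1) (p - 1) q z ∧
      ReachesZero (transpose g) d2 d1 (r - 1) (q - 1) p η)

/-- The total-degree-`k` part of the complex. -/
def TotDeg (g : ℤ → ℤ → Submodule K V) (k : ℤ) : Submodule K V := ⨆ p : ℤ, g p (k - p)

/-- `x` (of total degree `k`) is `d`-exact. -/
def DExact (g : ℤ → ℤ → Submodule K V) (d1 d2 : V →ₗ[K] V) (k : ℤ) (x : V) : Prop :=
  ∃ y ∈ TotDeg g (k - 1), x = d1 y + d2 y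

/-- The De Rham cohomology in degree `k` is *full*: every `d`-closed form of total degree
`k` is, modulo `Im d`, a sum of `d`-closed pure-type forms. -/
def DRFull (g : ℤ → ℤ → Submodule K V) (d1 d2 : V →ₗ[K] V) (k : ℤ) : Prop :=
  ∀ x ∈ TotDeg g k, d1 x + d2 x = 0 →
    ∃ (s : Finset ℤ) (c : ℤ → V),
      (∀ p ∈ s, c p ∈ g p (k - p) ∧ d1 (c p) = 0 ∧ d2 (c p) = 0) ∧
      ∃ y ∈ TotDeg g (k - 1), x = (∑ p ∈ s, c p) + (d1 y + d2 y)

/-- The De Rham cohomology in degree `k` is *pure*: the subspaces `H^{p,q}_{DR}` with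
`p + q = k` are in direct sum. -/
def DRPureDeg (g : ℤ → ℤ → Submodule K V) (d1 d2 : V →ₗ[K] V) (k : ℤ) : Prop :=
  ∀ (s : Finset ℤ) (c : ℤ → V),
    (∀ p ∈ s, c p ∈ g p (k - p) ∧ d1 (c p) = 0 ∧ d2 (c p) = 0) →
    DExact g d1 d2 k (∑ p ∈ s, c p) → ∀ p ∈ s, DExact g d1 d2 k (c p)

/-- Purity of the De Rham cohomology: `H^k_{DR} = ⊕_{p+q=k} H^{p,q}_{DR}` for every `k`. -/
def DRPure (g : ℤ → ℤ → Submodule K V) (d1 d2 : V →ₗ[K] V) : Prop :=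
  (∀ k : ℤ, DRFull g d1 d2 k) ∧ ∀ k : ℤ, DRPureDeg g d1 d2 k

/-- The (column) Frölicher spectral sequence degenerates at `E_r`: from page `r` on, the
spaces of `E_s`-closed and `E_s`-exact pure-type forms stabilise. -/
def DegenAt (g : ℤ → ℤ → Submodule K V) (d1 d2 : V →ₗ[K] V) (r : ℕ) : Prop :=
  ∀ s : ℕ, r ≤ s → ∀ p q : ℤ, ∀ x ∈ g p q,
    (ErClosed g d1 d2 s p q x ↔ ErClosed g d1 d2 (s + 1) p q x) ∧
    (ErExact g d1 d2 s p q x ↔ ErExact g d1 d2 (s + 1) p q x)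

/-- `X` is a page-`r`-`∂∂̄`-manifold: the Frölicher spectral sequence degenerates at
`E_{r+1}` and the De Rham cohomology is pure. -/
def PageDdbar (g : ℤ → ℤ → Submodule K V) (d1 d2 : V →ₗ[K] V) (r : ℕ) : Prop :=
  DegenAt g d1 d2 (r + 1) ∧ DRPure g d1 d2

/-- Dimension of a subquotient `Nm / (Dn ∩ Nm)`. -/
noncomputable def hdim (Nm Dn : Submodule K V) : ℕ :=
  Module.finrank K (↥Nm ⧸ (Dn.comap Nm.subtype))

theorem mem_totDeg (g : ℤ → ℤ → Submodule K V) {a b k : ℤ} {x : V} (hx : x ∈ g a b)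
    (hk : a + b = k) : x ∈ TotDeg g k := by
  obtain rfl : b = k - a := by omega
  exact le_iSup (fun p => g p (k - p)) a hx

theorem totDeg_transpose (g : ℤ → ℤ → Submodule K V) (k : ℤ) :
    TotDeg (transpose g) k = TotDeg g k := by
  rw [TotDeg, TotDeg, ← (Equiv.subLeft k).iSup_comp]
  simp [transpose]

theorem dExact_iff_mem_map (g : ℤ → ℤ → Submodule K V) (d1 d2 : V →ₗ[K] V) (k : ℤ) (x : V) :
    DExact g d1 d2 k x ↔ x ∈ (TotDeg g (k - 1)).map (d1 + d2) := by
  simp [DExact, Submodule.mem_map, eq_comm]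

theorem DExact.of_transpose {g : ℤ → ℤ → Submodule K V} {d1 d2 : V →ₗ[K] V} {k : ℤ} {x : V}
    (h : DExact (transpose g) d2 d1 k x) : DExact g d1 d2 k x := by
  obtain ⟨y, hy, rfl⟩ := h
  exact ⟨y, totDeg_transpose g (k - 1) ▸ hy, add_comm _ _⟩

theorem telescope_zigzag {R M : Type*} [Semiring R] [AddCommGroup M] [Module R M]
    (d1 d2 : M →ₗ[R] M) (v : ℕ → M) (n : ℕ) (h : ∀ l < n, d2 (v l) = d1 (v (l + 1))) :
    d1 (∑ l ∈ Finset.range (n + 1), (-1 : ℤ) ^ l • v l) +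
        d2 (∑ l ∈ Finset.range (n + 1), (-1 : ℤ) ^ l • v l) =
      d1 (v 0) + (-1 : ℤ) ^ n • d2 (v n) := by
  induction n with
  | zero => simp
  | succ n ih =>
    rw [Finset.sum_range_succ, map_add, map_add, add_add_add_comm,
      ih fun l hl => h l (by omega), h n (by omega), map_zsmul, map_zsmul, pow_succ]
    module

theorem ReachesZero.dExact_d2 {g : ℤ → ℤ → Submodule K V} {d1 d2 : V →ₗ[K] V} {m : ℕ}
    {p q k : ℤ} {z : V} (hm : 1 ≤ m) (h : ReachesZero g d1 d2 m p q z) (hk : p + q + 1 = k) :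
    DExact g d1 d2 k (d2 z) := by
  subst hk
  obtain ⟨v, hv, hone, hmany⟩ := h
  rcases hm.eq_or_lt with rfl | hm
  · exact ⟨0, zero_mem _, by simp [hone rfl]⟩
  obtain ⟨hfirst, hlast, hstep⟩ := hmany hm
  refine ⟨∑ l ∈ Finset.range (m - 2 + 1), (-1 : ℤ) ^ l • v l,
    sum_mem fun l _ => zsmul_mem (mem_totDeg g (hv l) (by ring)) _, ?_⟩
  rw [telescope_zigzag d1 d2 v (m - 2) fun l hl => hstep l (by omega), hlast, smul_zero,
    add_zero, hfirst]

theorem statement14_general {W : Type} [AddCommGroup W] [Module ℂ W]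
    (g : ℤ → ℤ → Submodule ℂ W) (d1 d2 : W →ₗ[ℂ] W)
    (hdc : IsBigradedDC g d1 d2)
    (r : ℕ) (hr : 1 ≤ r) (p q : ℤ) (α : W)
    (hex : ErErBarExact g d1 d2 r p q α) :
    DExact g d1 d2 (p + q) α := by
  obtain ⟨z, ξ, η, hz, hξ, hη, rfl, hr1, hr2⟩ := hex
  obtain ⟨hd2z, hd1η⟩ : DExact g d1 d2 (p + q) (d2 z) ∧ DExact g d1 d2 (p + q) (d1 η) := by
    rcases hr.eq_or_lt with rfl | hr
    · obtain ⟨rfl, rfl⟩ := hr1 rfl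
      simp only [map_zero, dExact_iff_mem_map, zero_mem, and_self]
    obtain ⟨hz', hη'⟩ := hr2 hr
    exact ⟨hz'.dExact_d2 (by omega) (by ring), (hη'.dExact_d2 (by omega) (by ring)).of_transpose⟩
  have hd2ξ : d2 ξ ∈ g (p - 1) q := by simpa using hdc.d2_mem _ _ ξ hξ
  have hsplit : d1 z + d1 (d2 ξ) + d2 η = (d1 + d2) (z + η + d2 ξ) - d2 z - d1 η := by
    simp only [LinearMap.add_apply, map_add, hdc.d2_sq]
    abel
  rw [dExact_iff_mem_map] at hd2z hd1η ⊢
  rw [hsplit]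
  refine sub_mem (sub_mem (Submodule.mem_map_of_mem ?_) hd2z) hd1η
  exact add_mem (add_mem (mem_totDeg g hz (by ring)) (mem_totDeg g hη (by ring)))
    (mem_totDeg g hd2ξ (by ring))

/-- Let `X` be a compact complex manifold and `r ≥ 1`.  If a
`(p,q)`-form `α` is `E_rĒ_r`-exact (i.e. `α = ∂ζ + ∂∂̄ξ + ∂̄η` with `∂̄ζ` and `∂η`
reaching `0` in at most `r-1` steps), then `α` is `d`-exact.  (The explicit telescoping
witness is `α = d[(ζ+η) + ∂̄ξ − w_{r-3} + ⋯ + (−1)^r w₀]`, `w_j = u_j + v_j`.) -/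
theorem statement14 {W : Type} [AddCommGroup W] [Module ℂ W]
    (g : ℤ → ℤ → Submodule ℂ W) (d1 d2 : W →ₗ[ℂ] W)
    (hdc : IsBigradedDC g d1 d2)
    (r : ℕ) (hr : 1 ≤ r) (p q : ℤ) (α : W)
    (hα : α ∈ g p q) (hex : ErErBarExact g d1 d2 r p q α) :
    DExact g d1 d2 (p + q) α :=
  statement14_general g d1 d2 hdc r hr p q α hex

end Stmt14
end
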